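/- Let (X,d) be a distance space such that (T_d,d∞) is a metric space (T_d is non-empty and d∞(f,g) < ∞ for all f,g ∈ T_d). Then for each z ∈ X the subspace (κ(z),d∞) is non-empty, hyperconvex, complete and geodesic. -/

import Mathlib

open scoped ENNReal

section CoreDefs

variable {Y : Type*}

/-- A distance space: symmetric, nonnegative, vanishing on the diagonal. -/
def IsDistance (d : Y → Y → ℝ) : Prop :=
  (∀ x y, 0 ≤ d x y) ∧ (∀ x y, d x y = d y x) ∧ ∀ x, d x x = 0

/-- The set `P_d` of functions dominating the distance `d`. -/
def Pd (d : Y → Y → ℝ) : Set (Y → ℝ) :=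
  {f | ∀ x y, d x y ≤ f x + f y}

/-- The tight span `T_d`: pointwise-minimal elements of `P_d`. -/
def Td (d : Y → Y → ℝ) : Set (Y → ℝ) :=
  {f | f ∈ Pd d ∧ ∀ g ∈ Pd d, g ≤ f → g = f}

/-- The sup-distance `d∞(f,g) = sup_x |f x - g x|`, valued in `[0,∞]`. -/
noncomputable def dInfty (f g : Y → ℝ) : ℝ≥0∞ :=
  ⨆ y, edist (f y) (g y)

/-- `κ(x) = {f ∈ T_d : f x = 0}`. -/
def kappa (d : Y → Y → ℝ) (x : Y) : Set (Y → ℝ) :=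
  {f | f ∈ Td d ∧ f x = 0}

/-- A pseudometric: symmetric, nonnegative, vanishing on the diagonal,
satisfying the triangle inequality. -/
def IsPseudometric (ρ : Y → Y → ℝ) : Prop :=
  (∀ x y, 0 ≤ ρ x y) ∧ (∀ x y, ρ x y = ρ y x) ∧ (∀ x, ρ x x = 0) ∧
  ∀ x y z, ρ x z ≤ ρ x y + ρ y z

/-- `M(d)`: the set of pseudometrics dominating `d`. -/
def Md (d : Y → Y → ℝ) : Set (Y → Y → ℝ) :=
  {ρ | IsPseudometric ρ ∧ ∀ x y, d x y ≤ ρ x y}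

end CoreDefs

section SetConvDefs

variable {Y : Type*}

/-- A subset `S` is complete for the distance `ρ`:
every Cauchy sequence in `S` converges to a point of `S`. -/
def CompleteOn (ρ : Y → Y → ℝ) (S : Set Y) : Prop :=
  ∀ u : ℕ → Y, (∀ n, u n ∈ S) →
    (∀ ε : ℝ, 0 < ε → ∃ N : ℕ, ∀ m ≥ N, ∀ n ≥ N, ρ (u m) (u n) < ε) →
    ∃ l ∈ S, ∀ ε : ℝ, 0 < ε → ∃ N : ℕ, ∀ n ≥ N, ρ (u n) l < ε

/-- A subset `S` is geodesic for the distance `ρ`: any two points of `S` are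
joined by an isometric image of a real segment lying inside `S`. -/
def GeodesicOn (ρ : Y → Y → ℝ) (S : Set Y) : Prop :=
  ∀ a ∈ S, ∀ b ∈ S, ∃ g : ℝ → Y, g 0 = a ∧ g (ρ a b) = b ∧
    (∀ t ∈ Set.Icc (0 : ℝ) (ρ a b), g t ∈ S) ∧
    ∀ s ∈ Set.Icc (0 : ℝ) (ρ a b), ∀ t ∈ Set.Icc (0 : ℝ) (ρ a b),
      ρ (g s) (g t) = |s - t|

/-- A subset `S` is hyperconvex for the distance `ρ`. -/
def HyperconvexOn (ρ : Y → Y → ℝ) (S : Set Y) : Prop :=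
  ∀ (ι : Type*) (y : ι → Y), (∀ α, y α ∈ S) → ∀ r : ι → ℝ, (∀ α, 0 ≤ r α) →
    (∀ α β, ρ (y α) (y β) ≤ r α + r β) → ∃ z ∈ S, ∀ α, ρ (y α) z ≤ r α

end SetConvDefs

/-!
Zorn's lemma puts an element of `T_d` below every element of `P_d`, and one that dominates
`d(·, z)` may first be lowered to `0` at `z`; this makes `κ(z)` nonempty. For hyperconvexity,
the pointwise infimum of the functions `y_α + r_α` lies in `P_d` and dominates `d(·, z)`, so some
`m ∈ κ(z)` lies below it; minimality of each `y_α` then gives the reverse bound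
`y_α ≤ m + r_α`. Uniform limits of elements of `T_d` stay in `T_d`, which gives completeness.
Finally, any hyperconvex metric space is geodesic: take by Zorn a maximal 1-Lipschitz partial
map from `[0, ρ(a, b)]` to the space through `0 ↦ a` and `ρ(a, b) ↦ b`; hyperconvexity extends
it to any missing point, and the triangle inequality through the two endpoints forces it to be
isometric.
-/

open Set Filter

universe u

section TightSpan

variable {X : Type*} {d : X → X → ℝ}

lemma nonneg_of_mem_Pd (hd : IsDistance d) {f : X → ℝ} (hf : f ∈ Pd d) (x : X) : 0 ≤ f x := by
  linarith [hf x x, hd.2.2 x]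

lemma exists_add_lt_of_mem_Td (hd : IsDistance d) {f : X → ℝ} (hf : f ∈ Td d) (x : X) {ε : ℝ}
    (hε : 0 < ε) : ∃ y, f x + f y < d x y + ε := by
  classical
  by_contra! hcon
  -- otherwise `f` could be lowered by `ε / 2` at `x` without leaving `P_d`
  set g := Function.update f x (f x - ε / 2)
  have hg : g ∈ Pd d := by
    intro u v
    simp only [g, Function.update_apply]
    split_ifs with hu hv hv
    · rw [hu, hv, hd.2.2]; linarith [hcon x, hd.2.2 x]
    · rw [hu]; linarith [hcon v]
    · rw [hv, hd.2.1]; linarith [hcon u]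
    · exact hf.1 u v
  have hgf : g ≤ f := fun u => by
    simp only [g, Function.update_apply]
    split_ifs with hu
    · rw [hu]; linarith
    · exact le_rfl
  have := congr_fun (hf.2 g hg hgf) x
  simp only [g, Function.update_self] at this
  linarith

lemma mem_Td_of_forall_exists_add_lt {f : X → ℝ} (hf : f ∈ Pd d)
    (h : ∀ x, ∀ ε > 0, ∃ y, f x + f y < d x y + ε) : f ∈ Td d := by
  refine ⟨hf, fun g hg hgf => funext fun x => (hgf x).antisymm ?_⟩
  refine le_of_forall_pos_le_add fun ε hε => ?_
  obtain ⟨y, hy⟩ := h x ε hε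
  linarith [hg x y, hgf y]

lemma bddBelow_range_of_le_add {ι : Type*} [Nonempty ι] {F : ι → X → ℝ}
    (hF : ∀ α β u v, d u v ≤ F α u + F β v) (x : X) : BddBelow (range fun α => F α x) := by
  obtain ⟨β⟩ := ‹Nonempty ι›
  exact ⟨d x x - F β x, by rintro _ ⟨α, rfl⟩; linarith [hF α β x x]⟩

lemma iInf_mem_Pd {ι : Type*} [Nonempty ι] {F : ι → X → ℝ}
    (hF : ∀ α β u v, d u v ≤ F α u + F β v) : (fun x => ⨅ α, F α x) ∈ Pd d := by
  intro u v
  refine le_of_forall_pos_le_add fun ε hε => ?_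
  obtain ⟨α, hα⟩ := exists_lt_of_ciInf_lt (lt_add_of_pos_right (⨅ α, F α u) (half_pos hε))
  obtain ⟨β, hβ⟩ := exists_lt_of_ciInf_lt (lt_add_of_pos_right (⨅ α, F α v) (half_pos hε))
  linarith [hF α β u v]

lemma exists_mem_Td_le {g : X → ℝ} (hg : g ∈ Pd d) : ∃ f ∈ Td d, f ≤ g := by
  have hchain : ∀ c ⊆ OrderDual.ofDual ⁻¹' Pd d, IsChain (· ≤ ·) c → ∀ f ∈ c,
      ∃ lb ∈ OrderDual.ofDual ⁻¹' Pd d, ∀ h ∈ c, h ≤ lb := by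
    intro c hcP hc f hf
    have : Nonempty c := ⟨⟨f, hf⟩⟩
    have hF : ∀ (h k : c) u v, d u v ≤ OrderDual.ofDual h.1 u + OrderDual.ofDual k.1 v := by
      intro h k u v
      rcases hc.total h.2 k.2 with hhk | hkh
      · have : OrderDual.ofDual k.1 u ≤ OrderDual.ofDual h.1 u := hhk u
        linarith [hcP k.2 u v]
      · have : OrderDual.ofDual h.1 v ≤ OrderDual.ofDual k.1 v := hkh v
        linarith [hcP h.2 u v]
    exact ⟨OrderDual.toDual fun x => ⨅ h : c, OrderDual.ofDual h.1 x, iInf_mem_Pd hF,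
      fun h hh x => ciInf_le (bddBelow_range_of_le_add hF x) ⟨h, hh⟩⟩
  obtain ⟨m, hmg, hm⟩ := zorn_le_nonempty₀ _ hchain (OrderDual.toDual g) hg
  exact ⟨m, ⟨hm.prop, fun f hf hfm => hm.eq_of_ge hf hfm⟩, hmg⟩

lemma le_add_of_mem_Td_of_le_add (hd : IsDistance d) {f m : X → ℝ} {c : ℝ} (hf : f ∈ Td d)
    (hm : m ∈ Pd d) (h : ∀ x, m x ≤ f x + c) (x : X) : f x ≤ m x + c := by
  refine le_of_forall_pos_le_add fun ε hε => ?_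
  obtain ⟨y, hy⟩ := exists_add_lt_of_mem_Td hd hf x hε
  linarith [hm x y, h y]

lemma mem_Td_of_forall_approx (hd : IsDistance d) {l : X → ℝ}
    (h : ∀ ε > 0, ∃ f ∈ Td d, ∀ x, |f x - l x| ≤ ε) : l ∈ Td d := by
  have hl : l ∈ Pd d := fun x y => le_of_forall_pos_le_add fun ε hε => by
    obtain ⟨f, hf, hfl⟩ := h (ε / 2) (half_pos hε)
    linarith [hf.1 x y, (abs_le.1 (hfl x)).2, (abs_le.1 (hfl y)).2]
  refine mem_Td_of_forall_exists_add_lt hl fun x ε hε => ?_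
  obtain ⟨f, hf, hfl⟩ := h (ε / 4) (by positivity)
  obtain ⟨y, hy⟩ := exists_add_lt_of_mem_Td hd hf x (show 0 < ε / 4 by positivity)
  exact ⟨y, by linarith [(abs_le.1 (hfl x)).1, (abs_le.1 (hfl y)).1]⟩

end TightSpan

section Kappa

variable {X : Type*} {d : X → X → ℝ} {z : X}

lemma update_zero_mem_Pd [DecidableEq X] (hd : IsDistance d) {g : X → ℝ} (hg : g ∈ Pd d)
    (hgz : ∀ x, d x z ≤ g x) : Function.update g z 0 ∈ Pd d := by
  intro u v
  simp only [Function.update_apply]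
  split_ifs with hu hv hv
  · rw [hu, hv, hd.2.2]; linarith
  · rw [hu, hd.2.1]; linarith [hgz v]
  · rw [hv]; linarith [hgz u]
  · exact hg u v

lemma exists_mem_kappa_le (hd : IsDistance d) {g : X → ℝ} (hg : g ∈ Pd d)
    (hgz : ∀ x, d x z ≤ g x) : ∃ f ∈ kappa d z, f ≤ g := by
  classical
  obtain ⟨f, hf, hfg⟩ := exists_mem_Td_le (update_zero_mem_Pd hd hg hgz)
  have hfz : f z = 0 := le_antisymm (by simpa using hfg z) (nonneg_of_mem_Pd hd hf.1 z)
  refine ⟨f, ⟨hf, hfz⟩, fun x => ?_⟩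
  rcases eq_or_ne x z with rfl | hx
  · linarith [hgz x, hd.2.2 x]
  · simpa [hx] using hfg x

lemma kappa_nonempty (hd : IsDistance d) (hne : (Td d).Nonempty) (z : X) :
    (kappa d z).Nonempty := by
  obtain ⟨f, hf⟩ := hne
  have hfz := nonneg_of_mem_Pd hd hf.1 z
  obtain ⟨g, hg, -⟩ := exists_mem_kappa_le (g := fun x => f x + f z) hd
    (fun x y => by linarith [hf.1 x y]) (fun x => hf.1 x z)
  exact ⟨g, hg⟩

lemma mem_kappa_of_forall_approx (hd : IsDistance d) {l : X → ℝ}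
    (h : ∀ ε > 0, ∃ f ∈ kappa d z, ∀ x, |f x - l x| ≤ ε) : l ∈ kappa d z := by
  refine ⟨mem_Td_of_forall_approx hd fun ε hε => ?_, ?_⟩
  · obtain ⟨f, hf, hfl⟩ := h ε hε
    exact ⟨f, hf.1, hfl⟩
  · refine (eq_of_forall_dist_le fun ε hε => ?_).symm
    obtain ⟨f, hf, hfl⟩ := h ε hε
    simpa [Real.dist_eq, hf.2] using hfl z

end Kappa

section Metric

variable {Y : Type u} {ρ : Y → Y → ℝ} {S : Set Y} {a b : Y}

structure IsMetricOn (ρ : Y → Y → ℝ) (S : Set Y) : Prop where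
  symm : ∀ a ∈ S, ∀ b ∈ S, ρ a b = ρ b a
  dist_self : ∀ a ∈ S, ρ a a = 0
  eq_of_dist_eq_zero : ∀ a ∈ S, ∀ b ∈ S, ρ a b = 0 → a = b
  triangle : ∀ a ∈ S, ∀ b ∈ S, ∀ c ∈ S, ρ a c ≤ ρ a b + ρ b c

lemma IsMetricOn.nonneg (hρ : IsMetricOn ρ S) (ha : a ∈ S) (hb : b ∈ S) : 0 ≤ ρ a b := by
  linarith [hρ.triangle a ha b hb a ha, hρ.dist_self a ha, hρ.symm a ha b hb]

/-- `G` is the graph of a 1-Lipschitz partial map `[0, ρ a b] ⇀ S` with `0 ↦ a`, `ρ a b ↦ b`. -/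
structure IsPartialGeodesic (ρ : Y → Y → ℝ) (S : Set Y) (a b : Y) (G : Set (ℝ × Y)) :
    Prop where
  start_mem : (0, a) ∈ G
  end_mem : (ρ a b, b) ∈ G
  mem : ∀ p ∈ G, p.1 ∈ Icc 0 (ρ a b) ∧ p.2 ∈ S
  dist_le : ∀ p ∈ G, ∀ q ∈ G, ρ p.2 q.2 ≤ |p.1 - q.1|

lemma isPartialGeodesic_pair (hρ : IsMetricOn ρ S) (ha : a ∈ S) (hb : b ∈ S) :
    IsPartialGeodesic ρ S a b {(0, a), (ρ a b, b)} where
  start_mem := mem_insert _ _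
  end_mem := mem_insert_of_mem _ rfl
  mem := by
    have hD := hρ.nonneg ha hb
    rintro p (rfl | rfl)
    · exact ⟨⟨le_rfl, hD⟩, ha⟩
    · exact ⟨⟨hD, le_rfl⟩, hb⟩
  dist_le := by
    have hD := hρ.nonneg ha hb
    rintro p (rfl | rfl) q (rfl | rfl)
    · simp [hρ.dist_self a ha]
    · simp [abs_of_nonneg hD]
    · simp [hρ.symm b hb a ha, abs_of_nonneg hD]
    · simp [hρ.dist_self b hb]

lemma IsPartialGeodesic.insert {G : Set (ℝ × Y)} (hG : IsPartialGeodesic ρ S a b G)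
    (hρ : IsMetricOn ρ S) {t : ℝ} {w : Y} (ht : t ∈ Icc 0 (ρ a b)) (hw : w ∈ S)
    (hwG : ∀ p ∈ G, ρ p.2 w ≤ |p.1 - t|) : IsPartialGeodesic ρ S a b (insert (t, w) G) where
  start_mem := mem_insert_of_mem _ hG.start_mem
  end_mem := mem_insert_of_mem _ hG.end_mem
  mem := by
    rintro p (rfl | hp)
    · exact ⟨ht, hw⟩
    · exact hG.mem p hp
  dist_le := by
    rintro p (rfl | hp) q (rfl | hq)
    · simp [hρ.dist_self w hw]
    · rw [hρ.symm w hw q.2 (hG.mem q hq).2, abs_sub_comm]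
      exact hwG q hq
    · exact hwG p hp
    · exact hG.dist_le p hp q hq

lemma exists_maximal_isPartialGeodesic (hρ : IsMetricOn ρ S) (ha : a ∈ S) (hb : b ∈ S) :
    ∃ G, Maximal (IsPartialGeodesic ρ S a b) G := by
  have hchain : ∀ c ⊆ {G | IsPartialGeodesic ρ S a b G}, IsChain (· ⊆ ·) c → c.Nonempty →
      ∃ H ∈ {G | IsPartialGeodesic ρ S a b G}, ∀ G ∈ c, G ⊆ H := by
    rintro c hc hch ⟨G₀, hG₀⟩
    refine ⟨⋃₀ c, ⟨⟨G₀, hG₀, (hc hG₀).start_mem⟩, ⟨G₀, hG₀, (hc hG₀).end_mem⟩, ?_, ?_⟩,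
      fun _ => subset_sUnion_of_mem⟩
    · rintro p ⟨G, hGc, hpG⟩
      exact (hc hGc).mem p hpG
    · rintro p ⟨G, hGc, hpG⟩ q ⟨G', hG'c, hqG'⟩
      rcases hch.total hGc hG'c with hGG' | hG'G
      · exact (hc hG'c).dist_le p (hGG' hpG) q hqG'
      · exact (hc hGc).dist_le p hpG q (hG'G hqG')
  obtain ⟨G, -, hG⟩ := zorn_subset_nonempty _ hchain _ (isPartialGeodesic_pair hρ ha hb)
  exact ⟨G, hG⟩

lemma IsPartialGeodesic.exists_mem_of_maximal {G : Set (ℝ × Y)} (hρ : IsMetricOn ρ S)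
    (hS : HyperconvexOn.{u, u} ρ S) (hG : Maximal (IsPartialGeodesic ρ S a b) G) {t : ℝ}
    (ht : t ∈ Icc 0 (ρ a b)) : ∃ w, (t, w) ∈ G := by
  obtain ⟨w, hw, hwG⟩ := hS G (fun p => p.1.2) (fun p => (hG.prop.mem _ p.2).2)
    (fun p => |p.1.1 - t|) (fun _ => abs_nonneg _) fun p q =>
      (hG.prop.dist_le _ p.2 _ q.2).trans <| by
        simpa only [abs_sub_comm t] using abs_sub_le p.1.1 t q.1.1
  have hins := hG.prop.insert hρ ht hw fun p hp => hwG ⟨p, hp⟩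
  exact ⟨w, hG.2 hins (subset_insert _ _) (mem_insert _ _)⟩

/-- Isometry is forced by the triangle inequality through the endpoints `a` and `b`. -/
lemma IsPartialGeodesic.dist_eq {G : Set (ℝ × Y)} (hG : IsPartialGeodesic ρ S a b G)
    (hρ : IsMetricOn ρ S) {p q : ℝ × Y} (hp : p ∈ G) (hq : q ∈ G) :
    ρ p.2 q.2 = |p.1 - q.1| := by
  have ha := (hG.mem _ hG.start_mem).2
  have hb := (hG.mem _ hG.end_mem).2
  have hge : ∀ p ∈ G, ∀ q ∈ G, p.1 ≤ q.1 → q.1 - p.1 ≤ ρ p.2 q.2 := by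
    intro p hp q hq hpq
    obtain ⟨⟨hp0, -⟩, hpS⟩ := hG.mem p hp
    obtain ⟨⟨-, hqD⟩, hqS⟩ := hG.mem q hq
    have hap := hG.dist_le _ hG.start_mem _ hp
    have hqb := hG.dist_le _ hq _ hG.end_mem
    simp only [zero_sub, abs_neg, abs_of_nonneg hp0] at hap
    rw [abs_of_nonpos (by linarith)] at hqb
    linarith [hρ.triangle a ha p.2 hpS b hb, hρ.triangle p.2 hpS q.2 hqS b hb]
  refine (hG.dist_le p hp q hq).antisymm ?_
  rcases le_total p.1 q.1 with hpq | hqp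
  · rw [abs_sub_comm, abs_of_nonneg (sub_nonneg.2 hpq)]
    exact hge p hp q hq hpq
  · rw [abs_of_nonneg (sub_nonneg.2 hqp), hρ.symm _ (hG.mem p hp).2 _ (hG.mem q hq).2]
    exact hge q hq p hp hqp

theorem HyperconvexOn.geodesicOn (hS : HyperconvexOn.{u, u} ρ S) (hρ : IsMetricOn ρ S) :
    GeodesicOn ρ S := by
  intro a ha b hb
  obtain ⟨G, hG⟩ := exists_maximal_isPartialGeodesic hρ ha hb
  have hgraph : ∀ t, ∃ w, t ∈ Icc 0 (ρ a b) → (t, w) ∈ G := fun t => by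
    by_cases ht : t ∈ Icc 0 (ρ a b)
    · obtain ⟨w, hw⟩ := IsPartialGeodesic.exists_mem_of_maximal hρ hS hG ht
      exact ⟨w, fun _ => hw⟩
    · exact ⟨a, fun h => absurd h ht⟩
  choose g hg using hgraph
  have hD := hρ.nonneg ha hb
  have hgS : ∀ t ∈ Icc 0 (ρ a b), g t ∈ S := fun t ht => (hG.prop.mem _ (hg t ht)).2
  have hg_eq : ∀ t ∈ Icc 0 (ρ a b), ∀ w, (t, w) ∈ G → g t = w := fun t ht w hw =>
    hρ.eq_of_dist_eq_zero _ (hgS t ht) _ (hG.prop.mem _ hw).2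
      (by simpa using hG.prop.dist_eq hρ (hg t ht) hw)
  exact ⟨g, hg_eq 0 ⟨le_rfl, hD⟩ a hG.prop.start_mem, hg_eq _ ⟨hD, le_rfl⟩ b hG.prop.end_mem,
    hgS, fun s hs t ht => hG.prop.dist_eq hρ (hg s hs) (hg t ht)⟩

end Metric

section SupDistance

variable {X : Type*} {d : X → X → ℝ} {z : X}

lemma abs_sub_le_toReal_dInfty {f g : X → ℝ} (h : dInfty f g ≠ ⊤) (x : X) :
    |f x - g x| ≤ (dInfty f g).toReal := by
  have := ENNReal.toReal_mono h (le_iSup (fun y => edist (f y) (g y)) x)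
  rwa [edist_dist, Real.dist_eq, ENNReal.toReal_ofReal (abs_nonneg _)] at this

lemma toReal_dInfty_le {f g : X → ℝ} {c : ℝ} (hc : 0 ≤ c) (h : ∀ x, |f x - g x| ≤ c) :
    (dInfty f g).toReal ≤ c :=
  ENNReal.toReal_le_of_le_ofReal hc <| iSup_le fun x => by
    rw [edist_dist, Real.dist_eq]
    exact ENNReal.ofReal_le_ofReal (h x)

lemma isMetricOn_toReal_dInfty {S : Set (X → ℝ)} (hfin : ∀ f ∈ S, ∀ g ∈ S, dInfty f g ≠ ⊤) :
    IsMetricOn (fun f g : X → ℝ => (dInfty f g).toReal) S where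
  symm f _ g _ := by simp only [dInfty, edist_comm]
  dist_self f _ := by simp [dInfty]
  eq_of_dist_eq_zero f hf g hg h := funext fun x => by
    have := abs_sub_le_toReal_dInfty (hfin f hf g hg) x
    rw [h] at this
    exact sub_eq_zero.1 (abs_nonpos_iff.1 this)
  triangle f hf g hg h hh := toReal_dInfty_le (by positivity) fun x =>
    (abs_sub_le _ _ _).trans <| add_le_add (abs_sub_le_toReal_dInfty (hfin f hf g hg) x)
      (abs_sub_le_toReal_dInfty (hfin g hg h hh) x)

lemma hyperconvexOn_kappa (hd : IsDistance d)
    (hfin : ∀ f ∈ kappa d z, ∀ g ∈ kappa d z, dInfty f g ≠ ⊤) (hκ : (kappa d z).Nonempty) :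
    HyperconvexOn (fun f g : X → ℝ => (dInfty f g).toReal) (kappa d z) := by
  intro ι y hy r hr hyr
  cases isEmpty_or_nonempty ι
  · obtain ⟨f, hf⟩ := hκ
    exact ⟨f, hf, isEmptyElim⟩
  have hF : ∀ α β u v, d u v ≤ (y α u + r α) + (y β v + r β) := fun α β u v => by
    have := abs_sub_le_toReal_dInfty (hfin _ (hy α) _ (hy β)) v
    linarith [(hy α).1.1 u v, (abs_le.1 this).2, hyr α β]
  obtain ⟨m, hm, hmF⟩ := exists_mem_kappa_le hd (iInf_mem_Pd hF) fun x =>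
    le_ciInf fun α => by linarith [(hy α).1.1 x z, (hy α).2, hr α]
  have hmy : ∀ α x, m x ≤ y α x + r α := fun α x =>
    (hmF x).trans (ciInf_le (bddBelow_range_of_le_add hF x) α)
  refine ⟨m, hm, fun α => toReal_dInfty_le (hr α) fun x => abs_le.2 ⟨?_, ?_⟩⟩
  · linarith [hmy α x]
  · linarith [le_add_of_mem_Td_of_le_add hd (hy α).1 hm.1.1 (hmy α) x]

lemma completeOn_kappa (hd : IsDistance d)
    (hfin : ∀ f ∈ kappa d z, ∀ g ∈ kappa d z, dInfty f g ≠ ⊤) :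
    CompleteOn (fun f g : X → ℝ => (dInfty f g).toReal) (kappa d z) := by
  intro u hu hcauchy
  have hunif : UniformCauchySeqOn u atTop univ := Metric.uniformCauchySeqOn_iff.2 fun ε hε => by
    obtain ⟨N, hN⟩ := hcauchy ε hε
    exact ⟨N, fun m hm n hn x _ =>
      (abs_sub_le_toReal_dInfty (hfin _ (hu m) _ (hu n)) x).trans_lt (hN m hm n hn)⟩
  choose l hl using fun x => cauchySeq_tendsto_of_complete (hunif.cauchySeq (mem_univ x))
  have hlim := Metric.tendstoUniformlyOn_iff.1 (hunif.tendstoUniformlyOn_of_tendsto fun x _ => hl x)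
  have hclose : ∀ ε > 0, ∃ N, ∀ n ≥ N, ∀ x, |u n x - l x| ≤ ε := fun ε hε => by
    obtain ⟨N, hN⟩ := eventually_atTop.1 (hlim ε hε)
    exact ⟨N, fun n hn x => by rw [abs_sub_comm, ← Real.dist_eq]; exact (hN n hn x trivial).le⟩
  refine ⟨l, mem_kappa_of_forall_approx hd fun ε hε => ?_, fun ε hε => ?_⟩
  · obtain ⟨N, hN⟩ := hclose ε hε
    exact ⟨u N, hu N, hN N le_rfl⟩
  · obtain ⟨N, hN⟩ := hclose (ε / 2) (half_pos hε)
    exact ⟨N, fun n hn => (toReal_dInfty_le (half_pos hε).le (hN n hn)).trans_lt (half_lt_self hε)⟩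

end SupDistance

theorem statement7_general {X : Type*} (d : X → X → ℝ)
    (hd : IsDistance d) (hne : (Td d).Nonempty)
    (hfin : ∀ f ∈ Td d, ∀ g ∈ Td d, dInfty f g ≠ ⊤) (z : X) :
    (kappa d z).Nonempty ∧
    HyperconvexOn (fun f g : X → ℝ => (dInfty f g).toReal) (kappa d z) ∧
    CompleteOn (fun f g : X → ℝ => (dInfty f g).toReal) (kappa d z) ∧
    GeodesicOn (fun f g : X → ℝ => (dInfty f g).toReal) (kappa d z) := by
  have hfinκ : ∀ f ∈ kappa d z, ∀ g ∈ kappa d z, dInfty f g ≠ ⊤ :=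
    fun f hf g hg => hfin f hf.1 g hg.1
  have hκ := kappa_nonempty hd hne z
  exact ⟨hκ, hyperconvexOn_kappa hd hfinκ hκ, completeOn_kappa hd hfinκ,
    (hyperconvexOn_kappa hd hfinκ hκ).geodesicOn (isMetricOn_toReal_dInfty hfinκ)⟩

/-- If `(T_d, d∞)` is a metric space, then for each `z ∈ X` the subspace
`(κ(z), d∞)` is nonempty, hyperconvex, complete and geodesic. -/
theorem statement7 {X : Type*} [Nonempty X] (d : X → X → ℝ)
    (hd : IsDistance d) (hne : (Td d).Nonempty)
    (hfin : ∀ f ∈ Td d, ∀ g ∈ Td d, dInfty f g ≠ ⊤) (z : X) :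
    (kappa d z).Nonempty ∧
    HyperconvexOn (fun f g : X → ℝ => (dInfty f g).toReal) (kappa d z) ∧
    CompleteOn (fun f g : X → ℝ => (dInfty f g).toReal) (kappa d z) ∧
    GeodesicOn (fun f g : X → ℝ => (dInfty f g).toReal) (kappa d z) :=
  statement7_general d hd hne hfin z
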